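/- arXiv:2008.02474 — 9 statements merged into one kernel-verified Lean document; each statement's English description precedes it below -/
import Mathlib

section
/- Let q be a prime power and E the Heisenberg group on F_{q^2} × F_q × F_{q^2} with operation (a, γ, b) ∘ (a', γ', b') = (a + a', γ + γ' + Tr(b^q a'), b + b'). For each t ∈ F_q, the set A_t = {(a, a^{q+1} t, a t) : a ∈ F_{q^2}} is a subgroup of E of order q^2. -/
open Polynomial

namespace BEL

variable {F : Type*} [Field F]

/-- The relative trace map `x ↦ x + x^q` from `F_{q^2}` to `F_q`. -/
def tr (q : ℕ) (x : F) : F := x + x ^ q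

/-- The Heisenberg group operation on `F_{q^2} × F_q × F_{q^2}`
(the middle coordinate is carried inside the big field). -/
def hmul (q : ℕ) (x y : F × F × F) : F × F × F :=
  (x.1 + y.1, x.2.1 + y.2.1 + tr q (x.2.2 ^ q * y.1), x.2.2 + y.2.2)

/-- The underlying set `F_{q^2} × F_q × F_{q^2}`: triples whose middle coordinate
lies in the subfield `F_q` (fixed points of `x ↦ x^q`). -/
def carrier (q : ℕ) : Set (F × F × F) := {x | x.2.1 ^ q = x.2.1}

/-- The subgroup `A_t = {(a, a^{q+1} t, a t) : a ∈ F_{q^2}}`. -/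
def A (q : ℕ) (t : F) : Set (F × F × F) := {x | ∃ a : F, x = (a, a ^ (q + 1) * t, a * t)}

/-- The subgroup `A*_t = {(a, γ, a t) : a ∈ F_{q^2}, γ ∈ F_q}`. -/
def Astar (q : ℕ) (t : F) : Set (F × F × F) :=
  {x | ∃ a γ : F, γ ^ q = γ ∧ x = (a, γ, a * t)}

/-- The subgroup `A_∞ = {(0, 0, a) : a ∈ F_{q^2}}`. -/
def Ainf : Set (F × F × F) := {x | ∃ a : F, x = (0, 0, a)}

/-- The subgroup `A*_∞ = {(0, γ, a) : γ ∈ F_q, a ∈ F_{q^2}}`. -/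
def Astarinf (q : ℕ) : Set (F × F × F) := {x | ∃ γ a : F, γ ^ q = γ ∧ x = (0, γ, a)}

/-- The family `A_i` indexed by `F_q ∪ {∞}` (`none` is `∞`). -/
def Afam (q : ℕ) : Option F → Set (F × F × F)
  | none => Ainf
  | some t => A q t

/-- The family `A*_i` indexed by `F_q ∪ {∞}` (`none` is `∞`). -/
def Astarfam (q : ℕ) : Option F → Set (F × F × F)
  | none => Astarinf q
  | some t => Astar q t

/-- The map `τ_λ` (depending also on `κ`), written out explicitly on triples. -/
def tau (q : ℕ) (κ lam : F) (x : F × F × F) : F × F × F :=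
  (x.1,
    tr q (lam * x.1 + κ * lam * x.1 ^ q + (2 : F)⁻¹ * lam ^ q * x.1 ^ 2) + x.2.1,
    lam * x.1 ^ q + x.2.2)

/-- The subgroup `A_t^λ`. -/
def Alam (q : ℕ) (κ lam t : F) : Set (F × F × F) :=
  {x | ∃ a : F,
    x = (a,
      a ^ (q + 1) * t + tr q (lam * a + κ * lam * a ^ q + (2 : F)⁻¹ * lam ^ q * a ^ 2),
      a * t + lam * a ^ q)}

theorem A_t_subgroup_of_order_q_sq (p n q : ℕ) (hp : p.Prime) (hn : 0 < n)
    (hq : q = p ^ n) (F : Type*) [Field F] [Fintype F] (hF : Fintype.card F = q ^ 2)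
    (t : F) (ht : t ^ q = t) :
    A q t ⊆ carrier q ∧
    (0, 0, 0) ∈ A (F := F) q t ∧
    (∀ x y : F × F × F, x ∈ A q t → y ∈ A q t → hmul q x y ∈ A q t) ∧
    (∀ x ∈ A (F := F) q t, ∃ y ∈ A (F := F) q t,
      hmul q x y = (0, 0, 0) ∧ hmul q y x = (0, 0, 0)) ∧
    Nat.card (A (F := F) q t) = q ^ 2 := by
  -- characteristic
  obtain ⟨r, hr⟩ := CharP.exists F
  haveI := hr
  have hrp : r.Prime := CharP.char_is_prime F r
  have hrdvd : (r : ℕ) ∣ Fintype.card F := by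
    classical
    obtain ⟨m, hm⟩ := FiniteField.card F r
    rw [hm.2]
    exact dvd_pow_self r m.2.ne'
  have hrp' : r = p := by
    have : r ∣ p ^ (n * 2) := by
      rw [hF, hq, ← pow_mul] at hrdvd
      exact hrdvd
    exact (Nat.prime_dvd_prime_iff_eq hrp hp).mp (hrp.dvd_of_dvd_pow this)
  subst hrp'
  have hq0 : q ≠ 0 := by rw [hq]; exact pow_ne_zero n hrp.pos.ne'
  haveI := Fact.mk hrp
  haveI : ExpChar F r := ExpChar.prime hrp
  -- Frobenius facts
  have hadd : ∀ x y : F, (x + y) ^ q = x ^ q + y ^ q := by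
    intro x y; rw [hq]; exact add_pow_char_pow x y r n
  have hneg : ∀ x : F, (-x) ^ q = -(x ^ q) := by
    intro x
    have h := hadd (-x) x
    rw [neg_add_cancel, zero_pow hq0] at h
    exact eq_neg_of_add_eq_zero_left h.symm
  have hqq : ∀ x : F, x ^ (q * q) = x := by
    intro x
    have := FiniteField.pow_card x
    rwa [hF, sq] at this
  have hfix : ∀ a : F, (a ^ (q + 1)) ^ q = a ^ (q + 1) := by
    intro a
    rw [← pow_mul, add_mul, one_mul, pow_add, hqq, ← pow_succ']
  refine ⟨?_, ⟨0, by simp⟩, ?_, ?_, ?_⟩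
  · rintro x ⟨a, rfl⟩
    show ((a ^ (q + 1) * t)) ^ q = a ^ (q + 1) * t
    rw [mul_pow, hfix, ht]
  · rintro x y ⟨a, rfl⟩ ⟨b, rfl⟩
    refine ⟨a + b, ?_⟩
    simp only [hmul, tr, Prod.mk.injEq]
    refine ⟨by trivial, ?_, by ring⟩
    have h1 : (a * t) ^ q = a ^ q * t := by rw [mul_pow, ht]
    have h2 : (a ^ q * t * b) ^ q = a * t * b ^ q := by
      rw [mul_pow, mul_pow, ← pow_mul, hqq, ht]
    have h3 : (a + b) ^ (q + 1) = a ^ (q + 1) + a ^ q * b + a * b ^ q + b ^ (q + 1) := by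
      rw [pow_succ, pow_succ, pow_succ, hadd]
      ring
    rw [h1, h2, h3]
    ring
  · rintro x ⟨a, rfl⟩
    have key : (a * t) ^ q * (-a) = -(a ^ (q + 1) * t) := by
      rw [mul_pow, ht, pow_succ]; ring
    have key2 : (-(a ^ (q + 1) * t)) ^ q = -(a ^ (q + 1) * t) := by
      rw [hneg, mul_pow, hfix, ht]
    have keyneg : (-a) ^ (q + 1) = a ^ (q + 1) := by
      rw [pow_succ, pow_succ, hneg]; ring
    have key3 : (-a * t) ^ q * a = -(a ^ (q + 1) * t) := by
      rw [mul_pow, hneg, ht, pow_succ]; ring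
    refine ⟨(-a, (-a) ^ (q + 1) * t, -a * t), ⟨-a, rfl⟩, ?_, ?_⟩
    · simp only [hmul, tr, Prod.mk.injEq, key, key2, keyneg]
      refine ⟨by ring, by ring, by ring⟩
    · simp only [hmul, tr, Prod.mk.injEq, key3, key2, keyneg]
      refine ⟨by ring, by ring, by ring⟩
    
  · have hinj : Function.Injective (fun a : F => (a, a ^ (q + 1) * t, a * t)) := by
      intro a b h
      exact congrArg Prod.fst h
    have hA : A (F := F) q t = Set.range (fun a : F => (a, a ^ (q + 1) * t, a * t)) := by
      ext x
      exact ⟨fun ⟨a, h⟩ => ⟨a, h.symm⟩, fun ⟨a, h⟩ => ⟨a, h.symm⟩⟩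
    rw [hA, Nat.card_range_of_injective hinj, Nat.card_eq_fintype_card, hF]

end BEL
end

section
/- Let q be a prime power and E the Heisenberg group on F_{q^2} × F_q × F_{q^2} as above. Let A_∞ = {(0,0,a) : a ∈ F_{q^2}} and A*_∞ = {(0, γ, a) : γ ∈ F_q, a ∈ F_{q^2}}, and for t ∈ F_q let A_t = {(a, a^{q+1}t, at) : a ∈ F_{q^2}} and A*_t = {(a, γ, at) : a ∈ F_{q^2}, γ ∈ F_q}. Then for distinct indices i, j in F_q ∪ {∞}, the intersection A_i ∩ A*_j is the trivial subgroup. -/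
open Polynomial

namespace BEL

variable {F : Type*} [Field F]

theorem kantor_axiom_K1 (p n q : ℕ) (hp : p.Prime) (hn : 0 < n)
    (hq : q = p ^ n) (F : Type*) [Field F] [Fintype F] (hF : Fintype.card F = q ^ 2)
    (i j : Option F) (hi : ∀ t : F, i = some t → t ^ q = t)
    (hj : ∀ t : F, j = some t → t ^ q = t) (hij : i ≠ j) :
    Afam q i ∩ Astarfam q j = {((0 : F), (0 : F), (0 : F))} := by
  have hq0 : q ≠ 0 := hq ▸ (pow_ne_zero _ hp.pos.ne')
  ext x
  simp only [Set.mem_inter_iff, Set.mem_singleton_iff]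
  constructor
  · rintro ⟨h1, h2⟩
    match i, j, hij with
    | none, none, hij => exact absurd rfl hij
    | none, some s, _ =>
        obtain ⟨a, rfl⟩ := h1
        obtain ⟨a', γ, hγ, he⟩ := h2
        simp only [Prod.mk.injEq] at he
        obtain ⟨e1, e2, e3⟩ := he
        subst e1 e2
        simp_all
    | some t, none, _ =>
        obtain ⟨a, rfl⟩ := h1
        obtain ⟨γ, a', hγ, he⟩ := h2
        simp only [Prod.mk.injEq] at he
        obtain ⟨e1, e2, e3⟩ := he
        subst e1
        simp [zero_pow, hq0]
    | some t, some s, hij =>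
        have hts : t ≠ s := fun h => hij (by rw [h])
        obtain ⟨a, rfl⟩ := h1
        obtain ⟨a', γ, hγ, he⟩ := h2
        simp only [Prod.mk.injEq] at he
        obtain ⟨e1, e2, e3⟩ := he
        subst e1
        have ha : a = 0 := by
          by_contra ha
          exact hts (mul_left_cancel₀ ha e3)
        subst ha
        simp [zero_pow, hq0]
  · rintro rfl
    refine ⟨?_, ?_⟩
    · match i with
      | none => exact ⟨0, rfl⟩
      | some t => exact ⟨0, by simp [hq0]⟩
    · match j with
      | none => exact ⟨0, 0, by simp [hq0], rfl⟩
      | some t => exact ⟨0, 0, by simp [hq0], by simp⟩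


end BEL
end

section
/- Let q be a prime power and E the Heisenberg group on F_{q^2} × F_q × F_{q^2} as above, with subgroups A_∞ = {(0,0,a) : a ∈ F_{q^2}} and A_t = {(a, a^{q+1}t, at) : a ∈ F_{q^2}} for t ∈ F_q. Then for pairwise distinct indices i, j, k in F_q ∪ {∞}, we have A_i A_j ∩ A_k = {1}, where A_i A_j denotes the set of products. -/
open Polynomial

namespace BEL

variable {F : Type*} [Field F]

theorem kantor_axiom_K2 (p n q : ℕ) (hp : p.Prime) (hn : 0 < n)
    (hq : q = p ^ n) (F : Type*) [Field F] [Fintype F] (hF : Fintype.card F = q ^ 2)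
    (i j k : Option F) (hi : ∀ t : F, i = some t → t ^ q = t)
    (hj : ∀ t : F, j = some t → t ^ q = t) (hk : ∀ t : F, k = some t → t ^ q = t)
    (hij : i ≠ j) (hik : i ≠ k) (hjk : j ≠ k) :
    ∀ y z : F × F × F, y ∈ Afam q i → z ∈ Afam q j → hmul q y z ∈ Afam q k →
      hmul q y z = (0, 0, 0) := by
  haveI hpF : Fact p.Prime := ⟨hp⟩
  have hq0 : q ≠ 0 := by subst hq; exact pow_ne_zero n hp.pos.ne'
  haveI hPF : CharP F p := by
    obtain ⟨r, hr⟩ := CharP.exists F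
    haveI := hr
    have hrp : r.Prime := CharP.char_is_prime F r
    obtain ⟨m, -, hcard'⟩ := FiniteField.card F r
    have hdvd : r ∣ q ^ 2 := by
      rw [← hF, hcard']; exact dvd_pow_self r m.pos.ne'
    have hrq : r ∣ q := hrp.dvd_of_dvd_pow hdvd
    rw [hq] at hrq
    have : r = p := (Nat.prime_dvd_prime_iff_eq hrp hp).mp (hrp.dvd_of_dvd_pow hrq)
    exact this ▸ hr
  have hfrob : ∀ x y : F, (x + y) ^ q = x ^ q + y ^ q := by
    intro x y; rw [hq]; exact add_pow_char_pow x y p n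
  have hqq : ∀ x : F, (x ^ q) ^ q = x := by
    intro x
    rw [← pow_mul]
    have h2 : q * q = Fintype.card F := by rw [hF]; ring
    rw [h2]; exact FiniteField.pow_card x
  have htr : ∀ x y : F, tr q (x ^ q * y) = x ^ q * y + x * y ^ q := by
    intro x y; simp only [tr, mul_pow, hqq]
  have hzero : ∀ x : F, x * x ^ q = 0 → x = 0 := by
    intro x hx
    rcases mul_eq_zero.mp hx with h | h
    · exact h
    · exact pow_eq_zero_iff hq0 |>.mp h
  intro y z hy hz hyz
  rcases i with _ | s <;> rcases j with _ | t <;> rcases k with _ | u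
  · exact absurd rfl hij
  · exact absurd rfl hij
  · exact absurd rfl hik
  · -- i = ∞, j = t, k = u
    have ht : t ^ q = t := hj t rfl
    have hu : u ^ q = u := hk u rfl
    have htu : t ≠ u := fun h => hjk (congrArg some h)
    obtain ⟨a, rfl⟩ := hy
    obtain ⟨b, rfl⟩ := hz
    obtain ⟨c, hc⟩ := hyz
    simp only [hmul, Prod.mk.injEq] at hc
    obtain ⟨h1, h2, h3⟩ := hc
    rw [zero_add] at h1
    subst h1
    rw [zero_add, htr] at h2
    simp only [pow_succ] at h2
    have h3q : a ^ q + b ^ q * t = b ^ q * u := by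
      have := congrArg (· ^ q) h3
      simpa only [hfrob, mul_pow, ht, hu] using this
    have hb : b * b ^ q * (u - t) = 0 := by
      linear_combination h2 - b ^ q * h3 - b * h3q
    have hb0 : b = 0 := hzero b (by
      rcases mul_eq_zero.mp hb with h | h
      · exact h
      · exact absurd (sub_eq_zero.mp h) (Ne.symm htu))
    subst hb0
    have ha0 : a = 0 := by
      have := h3; simp only [mul_zero, zero_mul, add_zero] at this
      simpa using this
    subst ha0
    simp [hmul, tr, zero_pow hq0]
  · exact absurd rfl hjk
  · -- i = s, j = ∞, k = u
    have hs : s ^ q = s := hi s rfl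
    have hu : u ^ q = u := hk u rfl
    have hsu : s ≠ u := fun h => hik (congrArg some h)
    obtain ⟨a, rfl⟩ := hy
    obtain ⟨b, rfl⟩ := hz
    obtain ⟨c, hc⟩ := hyz
    simp only [hmul, Prod.mk.injEq] at hc
    obtain ⟨h1, h2, h3⟩ := hc
    rw [add_zero] at h1
    subst h1
    rw [mul_zero, tr, zero_pow hq0, add_zero, add_zero, add_zero] at h2
    simp only [pow_succ] at h2
    have ha : a * a ^ q * (s - u) = 0 := by linear_combination h2
    have ha0 : a = 0 := hzero a (by
      rcases mul_eq_zero.mp ha with h | h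
      · exact h
      · exact absurd (sub_eq_zero.mp h) hsu)
    subst ha0
    have hb0 : b = 0 := by simpa using h3
    subst hb0
    simp [hmul, tr, zero_pow hq0]
  · -- i = s, j = t, k = ∞
    have hs : s ^ q = s := hi s rfl
    have ht : t ^ q = t := hj t rfl
    have hst : s ≠ t := fun h => hij (congrArg some h)
    obtain ⟨a, rfl⟩ := hy
    obtain ⟨b, rfl⟩ := hz
    obtain ⟨c, hc⟩ := hyz
    simp only [hmul, Prod.mk.injEq] at hc
    obtain ⟨h1, h2, h3⟩ := hc
    rw [htr, mul_pow, hs] at h2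
    simp only [pow_succ] at h2
    have h1q : a ^ q + b ^ q = 0 := by
      have := congrArg (· ^ q) h1
      simpa only [hfrob, zero_pow hq0] using this
    have ha : a * a ^ q * (t - s) = 0 := by
      linear_combination h2 - (b * t + a * s) * h1q - (a ^ q * (s - t)) * h1
    have ha0 : a = 0 := hzero a (by
      rcases mul_eq_zero.mp ha with h | h
      · exact h
      · exact absurd (sub_eq_zero.mp h) (Ne.symm hst))
    subst ha0
    have hb0 : b = 0 := by simpa using h1
    subst hb0
    simp [hmul, tr, zero_pow hq0]
  · -- i = s, j = t, k = u
    have hs : s ^ q = s := hi s rfl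
    have ht : t ^ q = t := hj t rfl
    have hu : u ^ q = u := hk u rfl
    have hst : s ≠ t := fun h => hij (congrArg some h)
    have hsu : s ≠ u := fun h => hik (congrArg some h)
    have htu : t ≠ u := fun h => hjk (congrArg some h)
    obtain ⟨a, rfl⟩ := hy
    obtain ⟨b, rfl⟩ := hz
    obtain ⟨c, hc⟩ := hyz
    simp only [hmul, Prod.mk.injEq] at hc
    obtain ⟨h1, h2, h3⟩ := hc
    subst h1
    rw [htr, mul_pow, hs] at h2
    simp only [pow_succ] at h2
    rw [hfrob] at h2
    have h3q : a ^ q * s + b ^ q * t = (a ^ q + b ^ q) * u := by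
      have := congrArg (· ^ q) h3
      simpa only [hfrob, mul_pow, hs, ht, hu] using this
    have hb : b * b ^ q * (t - u) * (t - s) = 0 := by
      linear_combination (s - u) * h2 - ((a ^ q + b ^ q) * (s - u)) * h3 -
        (b * (s - t)) * h3q
    have hb0 : b = 0 := hzero b (by
      rcases mul_eq_zero.mp hb with h | h
      · rcases mul_eq_zero.mp h with h' | h'
        · exact h'
        · exact absurd (sub_eq_zero.mp h') htu
      · exact absurd (sub_eq_zero.mp h) (Ne.symm hst))
    subst hb0
    have ha0 : a = 0 := by
      have h3' : a * (s - u) = 0 := by linear_combination h3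
      rcases mul_eq_zero.mp h3' with h | h
      · exact h
      · exact absurd (sub_eq_zero.mp h) hsu
    subst ha0
    simp [hmul, tr, zero_pow hq0]

end BEL
end

section
/- Let q be an odd prime power, E the Heisenberg group on F_{q^2} × F_q × F_{q^2} as above, and fix κ, λ ∈ F_{q^2}. Define τ_λ : E → E by τ_λ(a, γ, b) = (a, 0, 0)^{τ_λ} ∘ (0, γ', b'), where (a,0,0)^{τ_λ} = (a, Tr(λa + κλa^q + (1/2)λ^q a^2), λ a^q) and (0, γ', b') is the unique element of A*_∞ with (a, γ, b) = (a,0,0) ∘ (0, γ', b'). Then τ_λ is a group automorphism of E. -/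
open Polynomial

namespace BEL

variable {F : Type*} [Field F]

theorem tau_is_automorphism (p n q : ℕ) (hp : p.Prime) (hn : 0 < n)
    (hq : q = p ^ n) (hodd : Odd q)
    (F : Type*) [Field F] [Fintype F] (hF : Fintype.card F = q ^ 2) (κ lam : F) :
    Set.BijOn (tau q κ lam) (carrier (F := F) q) (carrier (F := F) q) ∧
    (∀ x ∈ carrier (F := F) q, ∀ y ∈ carrier (F := F) q,
      tau q κ lam (hmul q x y) = hmul q (tau q κ lam x) (tau q κ lam y)) := by
  haveI : Fact p.Prime := ⟨hp⟩
  haveI : CharP F p := by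
    set r := ringChar F with hr
    haveI : CharP F r := ringChar.charP F
    obtain ⟨m, hrp, hcard⟩ := FiniteField.card F r
    have hpr : p = r := by
      have hdvd : p ∣ r ^ (m : ℕ) := by
        rw [← hcard, hF, hq, ← pow_mul]
        exact dvd_pow_self p (by positivity)
      exact (Nat.prime_dvd_prime_iff_eq hp hrp).mp (hp.dvd_of_dvd_pow hdvd)
    rw [hpr]; infer_instance
  set f : F →+* F := iterateFrobenius F p n with hf
  have hxq : ∀ x : F, x ^ q = f x := by
    intro x; rw [hq, hf, iterateFrobenius_def]
  have hff : ∀ a : F, f (f a) = a := by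
    intro a
    rw [← hxq, ← hxq, ← pow_mul, ← sq, ← hF]
    exact FiniteField.pow_card a
  have hpodd : p ≠ 2 := by
    rintro rfl
    have : Even q := hq ▸ Nat.even_pow.mpr ⟨even_two, hn.ne'⟩
    exact (Nat.not_even_iff_odd.mpr hodd) this
  have h2 : (2 : F) ≠ 0 := by
    intro h0
    have hd : (p : ℕ) ∣ 2 := (CharP.cast_eq_zero_iff F p 2).mp (by exact_mod_cast h0)
    exact hpodd ((Nat.prime_dvd_prime_iff_eq hp Nat.prime_two).mp hd)
  -- maps-to for arbitrary μ
  have hmaps : ∀ μ : F, Set.MapsTo (tau q κ μ) (carrier (F := F) q) (carrier (F := F) q) := by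
    intro μ x hx
    simp only [carrier, Set.mem_setOf_eq] at hx ⊢
    simp only [tau, tr, hxq] at hx ⊢
    simp only [map_add, hff, hx]
    ring
  -- two-sided inverse
  have hinv : ∀ μ : F, ∀ x : F × F × F, tau q κ (-μ) (tau q κ μ x) = x := by
    intro μ x
    simp only [tau, tr, hxq, map_add, map_mul, map_pow, map_neg, map_inv₀, map_ofNat, hff]
    refine Prod.ext rfl (Prod.ext ?_ ?_) <;> simp only <;> ring
  have hinv2 : ∀ x : F × F × F, tau q κ lam (tau q κ (-lam) x) = x := by
    intro x
    have := hinv (-lam) x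
    rwa [neg_neg] at this
  constructor
  · refine Set.InvOn.bijOn ⟨fun x _ => hinv lam x, fun x _ => hinv2 x⟩ (hmaps lam) (hmaps (-lam))
  · intro x _ y _
    simp only [tau, hmul, tr, hxq, map_add, map_mul, map_pow, map_inv₀, map_ofNat, hff]
    refine Prod.ext rfl (Prod.ext ?_ ?_) <;> simp only
    · field_simp
      ring
    · ring


end BEL
end

section
/- For every odd prime power q, there exists κ ∈ F_{q^2} such that Tr(κa + a^{2q-1}) ≠ 0 for every nonzero a ∈ F_{q^2}, where Tr(x) = x + x^q is the relative trace from F_{q^2} to F_q. -/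
open Polynomial

namespace BEL

variable {F : Type*} [Field F]

/-!
For `a ≠ 0` put `u = a ^ (q - 1)`. Then `u ^ (q + 1) = 1`, so `u ^ q = u⁻¹`, and
`u * Tr (κ a + a ^ (2q - 1)) = a * (u³ + κ^q u² + κ u + 1)`; it suffices to find `κ` for which this
cubic has no root `u` in the group `U` of `(q + 1)`-st roots of unity.

Count incidences between `κ ∈ F` and `u ∈ U`. Each `κ` meets at most 3 points (a cubic in `u`),
each `u` meets at most `q` values of `κ` (a polynomial of degree `q` in `κ`), and two distinct
points of `U` always share a `κ` (a linear system in `κ, κ^q`, consistent because Frobenius inverts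
`U`). If every `κ` met `U`, counting pairs of points through a common `κ` would give
`N (N - 1) ≤ 3 (q N - q²)` for `N = |U|`, impossible for `q ≥ 3` since
`N² - (3q + 1) N + 3q²` has negative discriminant.
-/

open Finset

theorem exists_forall_not_rel_of_common_neighbor {α β : Type*} [DecidableEq β]
    {s : Finset α} {t : Finset β} {r : α → β → Prop} [∀ a b, Decidable (r a b)] {q : ℕ}
    (hq : 3 ≤ q) (hs : q ^ 2 ≤ #s) (hdeg : ∀ a ∈ s, #(t.bipartiteAbove r a) ≤ 3)
    (hcodeg : ∀ b ∈ t, #(s.bipartiteBelow r b) ≤ q)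
    (hcommon : ∀ b ∈ t, ∀ b' ∈ t, b ≠ b' → ∃ a ∈ s, r a b ∧ r a b') :
    ∃ a ∈ s, ∀ b ∈ t, ¬ r a b := by
  by_contra! hall
  have hsum : ∑ a ∈ s, #(t.bipartiteAbove r a) ≤ #t * q := by
    rw [sum_card_bipartiteAbove_eq_sum_card_bipartiteBelow]
    exact sum_le_card_nsmul _ _ _ hcodeg
  have hpairs : #t.offDiag ≤ ∑ a ∈ s, #(t.bipartiteAbove r a).offDiag := by
    rw [← card_sigma]
    refine card_le_card_of_surjOn (fun x ↦ x.2) fun ⟨b, b'⟩ hbb' ↦ ?_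
    obtain ⟨hb, hb', hne⟩ := mem_offDiag.1 hbb'
    obtain ⟨a, ha, hab, hab'⟩ := hcommon b hb b' hb' hne
    exact ⟨⟨a, b, b'⟩, by simp [ha, hb, hb', hab, hab', hne], rfl⟩
  have hpoint : ∀ a ∈ s, #(t.bipartiteAbove r a).offDiag + 3 ≤ 3 * #(t.bipartiteAbove r a) := by
    intro a ha
    obtain ⟨b, hb, hab⟩ := hall a ha
    have h1 : 1 ≤ #(t.bipartiteAbove r a) := card_pos.2 ⟨b, (mem_bipartiteAbove r).2 ⟨hb, hab⟩⟩
    have h3 := hdeg a ha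
    rw [offDiag_card]
    interval_cases #(t.bipartiteAbove r a) <;> simp
  have key : #t.offDiag + 3 * q ^ 2 ≤ 3 * q * #t := by
    calc #t.offDiag + 3 * q ^ 2
        ≤ ∑ a ∈ s, #(t.bipartiteAbove r a).offDiag + ∑ a ∈ s, 3 := by
          rw [sum_const, smul_eq_mul]; omega
      _ ≤ ∑ a ∈ s, 3 * #(t.bipartiteAbove r a) := by
          rw [← sum_add_distrib]; exact sum_le_sum hpoint
      _ ≤ 3 * q * #t := by rw [← mul_sum]; nlinarith
  rw [offDiag_card] at key
  zify [Nat.le_mul_self #t] at key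
  nlinarith [sq_nonneg (2 * (#t : ℤ) - 3 * q - 1)]

section Field

variable {F : Type*} [Field F]

theorem card_le_natDegree_of_forall_eval_eq_zero {P : F[X]} (hP : P ≠ 0) {Z : Finset F}
    (hZ : ∀ x ∈ Z, P.eval x = 0) : #Z ≤ P.natDegree :=
  card_le_degree_of_subset_roots fun x hx ↦ (mem_roots hP).2 (hZ x hx)

theorem card_filter_cubic_eq_zero_le [DecidableEq F] (s : Finset F) (b c d : F) :
    #{u ∈ s | u ^ 3 + b * u ^ 2 + c * u + d = 0} ≤ 3 := by
  have hdeg : (C 1 * X ^ 3 + C b * X ^ 2 + C c * X + C d : F[X]).natDegree = 3 :=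
    natDegree_cubic one_ne_zero
  refine (card_le_natDegree_of_forall_eval_eq_zero (ne_zero_of_natDegree_gt (n := 0) (by omega))
    fun u hu ↦ ?_).trans hdeg.le
  simpa using (mem_filter.1 hu).2

theorem card_filter_pow_eq_zero_le [DecidableEq F] (s : Finset F) {q : ℕ} (hq : 2 ≤ q) {a : F}
    (ha : a ≠ 0) (b c : F) : #{x ∈ s | a * x ^ q + b * x + c = 0} ≤ q := by
  have hcoeff : (C a * X ^ q + C b * X + C c : F[X]).coeff q = a := by
    simp [coeff_X, coeff_C, show 1 ≠ q by omega, show q ≠ 0 by omega]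
  have hdeg : (C a * X ^ q + C b * X + C c : F[X]).natDegree ≤ q := by compute_degree; omega
  have hP : (C a * X ^ q + C b * X + C c : F[X]) ≠ 0 := fun h ↦ ha (by simpa [h] using hcoeff.symm)
  refine (card_le_natDegree_of_forall_eval_eq_zero hP fun x hx ↦ ?_).trans hdeg
  simpa using (mem_filter.1 hx).2

theorem exists_cubic_eq_zero_and_cubic_eq_zero (σ : F →+* F) {u v : F} (hu : u ≠ 0) (hv : v ≠ 0)
    (huv : u ≠ v) (hσu : σ u = u⁻¹) (hσv : σ v = v⁻¹) :
    ∃ κ, u ^ 3 + σ κ * u ^ 2 + κ * u + 1 = 0 ∧ v ^ 3 + σ κ * v ^ 2 + κ * v + 1 = 0 := by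
  have hvu : v - u ≠ 0 := sub_ne_zero.2 huv.symm
  -- solve the linear system in `(κ, σ κ)`; the solution is consistent because `σ` inverts `u, v`
  refine ⟨(u ^ 2 * (1 + v ^ 3) - v ^ 2 * (1 + u ^ 3)) / (u * v * (v - u)), ?_⟩
  have hσκ : σ ((u ^ 2 * (1 + v ^ 3) - v ^ 2 * (1 + u ^ 3)) / (u * v * (v - u)))
      = (v * (1 + u ^ 3) - u * (1 + v ^ 3)) / (u * v * (v - u)) := by
    simp only [map_div₀, map_sub, map_mul, map_add, map_pow, map_one, hσu, hσv]
    have : v⁻¹ - u⁻¹ ≠ 0 := sub_ne_zero.2 (inv_injective.ne huv.symm)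
    field_simp
    ring
  rw [hσκ]
  constructor <;> field_simp <;> ring

variable {q : ℕ}

theorem pow_sub_one_pow_add_one_eq_one [Fintype F] (hcard : Fintype.card F = q ^ 2) {a : F}
    (ha : a ≠ 0) : (a ^ (q - 1)) ^ (q + 1) = 1 := by
  rw [← pow_mul, mul_comm, ← one_pow 2, ← Nat.sq_sub_sq, one_pow, ← hcard]
  exact FiniteField.pow_card_sub_one_eq_one a ha

theorem pow_eq_inv_of_pow_add_one_eq_one {u : F} (hu : u ^ (q + 1) = 1) : u ^ q = u⁻¹ :=
  eq_inv_of_mul_eq_one_left (by rw [← pow_succ, hu])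

theorem exists_forall_cubic_ne_zero [Fintype F] (σ : F →+* F) (hσ : ∀ x, σ x = x ^ q)
    (hq : 3 ≤ q) (hcard : Fintype.card F = q ^ 2) :
    ∃ κ : F, ∀ u : F, u ^ (q + 1) = 1 → u ^ 3 + κ ^ q * u ^ 2 + κ * u + 1 ≠ 0 := by
  classical
  set U : Finset F := {u | u ^ (q + 1) = 1}
  have hU0 : ∀ u ∈ U, u ≠ 0 := by rintro u hu rfl; simp [U] at hu
  have hcodeg : ∀ u ∈ U, #{κ ∈ univ | u ^ 3 + κ ^ q * u ^ 2 + κ * u + 1 = 0} ≤ q := by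
    intro u hu
    refine le_of_eq_of_le (congrArg card (filter_congr fun κ _ ↦ ?_))
      (card_filter_pow_eq_zero_le univ (by omega) (pow_ne_zero 2 (hU0 u hu)) u (u ^ 3 + 1))
    constructor <;> intro h <;> linear_combination h
  have hcommon : ∀ u ∈ U, ∀ v ∈ U, u ≠ v → ∃ κ ∈ univ, u ^ 3 + κ ^ q * u ^ 2 + κ * u + 1 = 0 ∧
      v ^ 3 + κ ^ q * v ^ 2 + κ * v + 1 = 0 := by
    intro u hu v hv huv
    obtain ⟨κ, hκ⟩ := exists_cubic_eq_zero_and_cubic_eq_zero σ (hU0 u hu) (hU0 v hv) huv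
      (by rw [hσ, pow_eq_inv_of_pow_add_one_eq_one (mem_filter.1 hu).2])
      (by rw [hσ, pow_eq_inv_of_pow_add_one_eq_one (mem_filter.1 hv).2])
    exact ⟨κ, mem_univ κ, by simpa only [hσ] using hκ⟩
  obtain ⟨κ, -, hκ⟩ := exists_forall_not_rel_of_common_neighbor hq (by simp [hcard])
    (fun κ _ ↦ card_filter_cubic_eq_zero_le _ _ _ _) hcodeg hcommon
  exact ⟨κ, fun u hu ↦ hκ u (mem_filter.2 ⟨mem_univ u, hu⟩)⟩

theorem pow_sub_one_mul_tr (σ : F →+* F) (hσ : ∀ x, σ x = x ^ q) (hq : 1 ≤ q) {a : F}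
    (hu : (a ^ (q - 1)) ^ (q + 1) = 1) (κ : F) :
    a ^ (q - 1) * tr q (κ * a + a ^ (2 * q - 1)) =
      a * ((a ^ (q - 1)) ^ 3 + κ ^ q * (a ^ (q - 1)) ^ 2 + κ * a ^ (q - 1) + 1) := by
  set u := a ^ (q - 1)
  have haq : a ^ q = a * u := by rw [← pow_succ']; congr 1; omega
  have ha2q : a ^ (2 * q - 1) = a * u ^ 2 := by rw [← pow_mul, ← pow_succ']; congr 1; omega
  have hfrob : (κ * a + a * u ^ 2) ^ q = κ ^ q * (a * u) + a * u * (u ^ q) ^ 2 := by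
    simp only [← hσ, map_add, map_mul, map_pow]
    simp only [hσ, haq]
  have huq : u ^ q * u = 1 := by rw [← pow_succ, hu]
  rw [tr, ha2q, hfrob]
  linear_combination a * (u ^ q * u + 1) * huq

end Field

theorem exists_kappa_general (p n q : ℕ) (hp : p.Prime)
    (hq : q = p ^ n) (hodd : Odd q)
    (F : Type*) [Field F] [Fintype F] (hF : Fintype.card F = q ^ 2) :
    ∃ κ : F, ∀ a : F, a ≠ 0 → tr q (κ * a + a ^ (2 * q - 1)) ≠ 0 := by
  have hq3 : 3 ≤ q := by
    have h1 : 1 < q ^ 2 := hF ▸ Fintype.one_lt_card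
    obtain ⟨k, rfl⟩ := hodd
    rcases k with _ | k
    · simp at h1
    · omega
  have : Fact p.Prime := ⟨hp⟩
  have : CharP F p := charP_of_card_eq_prime_pow (hF.trans (by rw [hq, ← pow_mul]))
  have hσ : ∀ x : F, iterateFrobenius F p n x = x ^ q := fun x ↦ by rw [iterateFrobenius_def, hq]
  obtain ⟨κ, hκ⟩ := exists_forall_cubic_ne_zero _ hσ hq3 hF
  refine ⟨κ, fun a ha h0 ↦ hκ _ (pow_sub_one_pow_add_one_eq_one hF ha) ?_⟩
  have htr := pow_sub_one_mul_tr _ hσ (by omega) (pow_sub_one_pow_add_one_eq_one hF ha) κ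
  rw [h0, mul_zero] at htr
  exact (mul_eq_zero.1 htr.symm).resolve_left ha

theorem exists_kappa (p n q : ℕ) (hp : p.Prime) (hn : 0 < n)
    (hq : q = p ^ n) (hodd : Odd q)
    (F : Type*) [Field F] [Fintype F] (hF : Fintype.card F = q ^ 2) :
    ∃ κ : F, ∀ a : F, a ≠ 0 → tr q (κ * a + a ^ (2 * q - 1)) ≠ 0 :=
  exists_kappa_general p n q hp hq hodd F hF

end BEL
end

section
/- Let q be an odd prime power and κ ∈ F_{q^2}. If κ is such that the polynomial y^3 − κ^q y^2 + κ y − 1 is irreducible over F_{q^2}, then Tr(κa + a^{2q-1}) ≠ 0 for all nonzero a ∈ F_{q^2}, where Tr(x) = x + x^q. -/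
open Polynomial

namespace BEL

variable {F : Type*} [Field F]

theorem kappa_of_irreducible_cubic (p n q : ℕ) (hp : p.Prime) (hn : 0 < n)
    (hq : q = p ^ n) (hodd : Odd q)
    (F : Type*) [Field F] [Fintype F] (hF : Fintype.card F = q ^ 2) (κ : F)
    (hirr : Irreducible (X ^ 3 - C (κ ^ q) * X ^ 2 + C κ * X - 1 : F[X])) :
    ∀ a : F, a ≠ 0 → tr q (κ * a + a ^ (2 * q - 1)) ≠ 0 := by
  intro a ha h
  haveI : Fact p.Prime := ⟨hp⟩
  have hchar : CharP F p := by
    have hrprime : (ringChar F).Prime := CharP.char_is_prime F (ringChar F)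
    haveI : Fact (ringChar F).Prime := ⟨hrprime⟩
    have hdvd : ringChar F ∣ Fintype.card F :=
      (prime_dvd_char_iff_dvd_card (ringChar F)).mp dvd_rfl
    rw [hF, hq, ← pow_mul] at hdvd
    have : ringChar F = p := (Nat.prime_dvd_prime_iff_eq hrprime hp).mp
      (hrprime.dvd_of_dvd_pow hdvd)
    exact this ▸ ringChar.charP F
  haveI := hchar
  have hfrob : ∀ x y : F, (x + y) ^ q = x ^ q + y ^ q := by
    subst hq; exact fun x y => add_pow_char_pow x y p n
  have hq2 : 2 ≤ q := by
    rw [hq]; exact Nat.one_lt_pow hn.ne' hp.one_lt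
  obtain ⟨m, rfl⟩ : ∃ m, q = m + 2 := ⟨q - 2, by omega⟩
  have hcard : a ^ ((m + 2) ^ 2) = a := by rw [← hF]; exact FiniteField.pow_card a
  have e1 : a ^ (m ^ 2 + 4 * m + 3) = 1 := by
    have h1 : a ^ (m ^ 2 + 4 * m + 3) * a = a := by
      rw [← pow_succ]
      rw [show m ^ 2 + 4 * m + 3 + 1 = (m + 2) ^ 2 by ring]
      exact hcard
    have h2 : a ^ (m ^ 2 + 4 * m + 3) * a = 1 * a := by rw [h1, one_mul]
    exact mul_right_cancel₀ ha h2
  rw [tr, hfrob, mul_pow, ← pow_mul] at h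
  rw [show 2 * (m + 2) - 1 = 2 * m + 3 by omega] at h
  rw [show (2 * m + 3) * (m + 2) = (m ^ 2 + 4 * m + 3) + (m ^ 2 + 3 * m + 3) by ring,
    pow_add a (m ^ 2 + 4 * m + 3) (m ^ 2 + 3 * m + 3), e1, one_mul] at h
  -- h : κ * a + a ^ (2m+3) + (κ ^ (m+2) * a ^ (m+2) + a ^ (m²+3m+3)) = 0
  set y : F := -a ^ (m + 1) with hy
  have hroot : (X ^ 3 - C (κ ^ (m + 2)) * X ^ 2 + C κ * X - 1 : F[X]).IsRoot y := by
    have e2 : (1 : F) = a ^ (m ^ 2 + 3 * m + 3) * a ^ m := by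
      rw [← pow_add, show m ^ 2 + 3 * m + 3 + m = m ^ 2 + 4 * m + 3 by ring, e1]
    have key : y ^ 3 - κ ^ (m + 2) * y ^ 2 + κ * y - 1 =
        -((κ * a + a ^ (2 * m + 3) +
          (κ ^ (m + 2) * a ^ (m + 2) + a ^ (m ^ 2 + 3 * m + 3))) * a ^ m) := by
      rw [hy]
      nth_rewrite 1 [e2]
      ring
    simp only [IsRoot, eval_sub, eval_add, eval_mul, eval_pow, eval_C, eval_X, eval_one]
    rw [key, h, zero_mul, neg_zero]
  obtain ⟨g, hg⟩ := dvd_iff_isRoot.mpr hroot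
  rcases hirr.isUnit_or_isUnit hg with hu | hu
  · exact Polynomial.not_isUnit_X_sub_C y hu
  · have hdeg : (X ^ 3 - C (κ ^ (m + 2)) * X ^ 2 + C κ * X - 1 : F[X]).natDegree = 3 := by
      compute_degree!
    rw [hg, natDegree_mul (X_sub_C_ne_zero y) hu.ne_zero, natDegree_X_sub_C,
      Polynomial.natDegree_eq_zero_of_isUnit hu] at hdeg
    omega

end BEL
end

section
/- Let q be an odd prime power, κ ∈ F_{q^2} with Tr(κa + a^{2q−1}) ≠ 0 for all nonzero a ∈ F_{q^2}. For λ ∈ F_{q^2} and t ∈ F_q, define A_t^λ = {(a, a^{q+1}t + Tr(λa + κλa^q + (1/2)λ^q a^2), at + λa^q) : a ∈ F_{q^2}} ⊆ E. Then for λ_1 ≠ λ_2 in F_{q^2} and any t_1, t_2 ∈ F_q, A_{t_1}^{λ_1} ∩ A_{t_2}^{λ_2} = {(0,0,0)}. -/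
open Polynomial

namespace BEL

variable {F : Type*} [Field F]

theorem Alam_intersection_trivial (p n q : ℕ) (hp : p.Prime) (hn : 0 < n)
    (hq : q = p ^ n) (hodd : Odd q)
    (F : Type*) [Field F] [Fintype F] (hF : Fintype.card F = q ^ 2) (κ : F)
    (hκ : ∀ a : F, a ≠ 0 → tr q (κ * a + a ^ (2 * q - 1)) ≠ 0)
    (lam₁ lam₂ t₁ t₂ : F) (hlam : lam₁ ≠ lam₂)
    (ht₁ : t₁ ^ q = t₁) (ht₂ : t₂ ^ q = t₂) :
    Alam q κ lam₁ t₁ ∩ Alam q κ lam₂ t₂ = {((0 : F), (0 : F), (0 : F))} := by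
  have hq0 : q ≠ 0 := by rw [hq]; exact pow_ne_zero _ hp.pos.ne'
  have hq1 : 1 ≤ q := Nat.one_le_iff_ne_zero.mpr hq0
  haveI hfp : Fact p.Prime := ⟨hp⟩
  -- characteristic
  haveI hchar : CharP F p := by
    obtain ⟨r, hr⟩ := CharP.exists F
    haveI := hr
    have hrprime : r.Prime := CharP.char_is_prime F r
    obtain ⟨m, -, hcard⟩ := FiniteField.card F r
    have hrp : r = p := by
      have h1 : r ∣ p ^ (n * 2) := by
        have : r ∣ Fintype.card F := hcard ▸ dvd_pow_self r m.pos.ne'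
        rwa [hF, hq, ← pow_mul] at this
      exact (Nat.prime_dvd_prime_iff_eq hrprime hp).mp (hrprime.dvd_of_dvd_pow h1)
    exact hrp ▸ hr
  have frobAdd : ∀ x y : F, (x + y) ^ q = x ^ q + y ^ q := by
    intro x y; rw [hq]; exact add_pow_char_pow x y p n
  have frobSub : ∀ x y : F, (x - y) ^ q = x ^ q - y ^ q := by
    intro x y; rw [hq]; exact sub_pow_char_pow x y n
  have hqq : ∀ x : F, (x ^ q) ^ q = x := by
    intro x
    have := FiniteField.pow_card x
    rw [hF, pow_two, mul_comm] at this  -- x ^ (q*q) = x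
    rw [← pow_mul]
    exact this
  have hsqq : ∀ x : F, (x ^ 2) ^ q = (x ^ q) ^ 2 := by
    intro x; rw [← pow_mul, mul_comm, pow_mul]
  -- 2 is invertible
  have hp2 : p ≠ 2 := by
    rintro rfl
    rw [hq] at hodd
    exact (Nat.not_odd_iff_even.mpr (Nat.even_pow.mpr ⟨even_two, hn.ne'⟩)) hodd
  have h2 : (2 : F) ≠ 0 := by
    intro h
    have := (CharP.cast_eq_zero_iff F p 2).mp (by exact_mod_cast h)
    exact hp2 ((Nat.prime_dvd_prime_iff_eq hp Nat.prime_two).mp this)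
  have h2' : (2 : F)⁻¹ + (2 : F)⁻¹ = 1 := by field_simp; ring
  have h2q : ((2 : F)⁻¹) ^ q = (2 : F)⁻¹ := by
    rw [inv_pow]
    congr 1
    have h21 : (2 : F) = 1 + 1 := by norm_num
    rw [h21, frobAdd, one_pow]
  -- expansion of tr on the relevant expression
  have hT : ∀ l a : F,
      tr q (l * a + κ * l * a ^ q + (2 : F)⁻¹ * l ^ q * a ^ 2)
        = l * a + κ * l * a ^ q + (2 : F)⁻¹ * l ^ q * a ^ 2
          + (l ^ q * a ^ q + κ ^ q * l ^ q * a + (2 : F)⁻¹ * l * (a ^ q) ^ 2) := by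
    intro l a
    unfold tr
    rw [frobAdd, frobAdd, mul_pow, mul_pow, mul_pow, mul_pow, mul_pow,
      hqq, hqq, h2q, hsqq]
  ext x
  simp only [Alam, Set.mem_inter_iff, Set.mem_setOf_eq, Set.mem_singleton_iff]
  constructor
  · rintro ⟨⟨a, ha⟩, ⟨b, hb⟩⟩
    rw [ha] at hb
    rw [Prod.mk.injEq, Prod.mk.injEq] at hb
    obtain ⟨e1, e2, e3⟩ := hb
    subst e1
    by_cases ha0 : a = 0
    · subst ha0
      rw [ha]
      norm_num [tr, zero_pow hq0]
    exfalso
    rw [hT, hT] at e2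
    -- basic equations
    have eqB : a * (t₁ - t₂) = (lam₂ - lam₁) * a ^ q := by linear_combination e3
    have eqA : a ^ q * (t₁ - t₂) = (lam₂ ^ q - lam₁ ^ q) * a := by
      have := congrArg (· ^ q) eqB
      simp only [mul_pow] at this
      rw [frobSub, ht₁, ht₂, frobSub, hqq] at this
      exact this
    have eqC : (lam₂ ^ q - lam₁ ^ q) * a ^ 2 = (lam₂ - lam₁) * (a ^ q) ^ 2 := by
      have h1 : a * (a ^ q * (t₁ - t₂)) = a ^ q * (a * (t₁ - t₂)) := by ring
      rw [eqA, eqB] at h1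
      linear_combination h1
    have hpow : a ^ (q + 1) = a * a ^ q := by rw [pow_succ]; ring
    rw [hpow] at e2
    have eqD : (lam₂ - lam₁) * a + κ * (lam₂ - lam₁) * a ^ q
        + (lam₂ ^ q - lam₁ ^ q) * a ^ q + κ ^ q * (lam₂ ^ q - lam₁ ^ q) * a = 0 := by
      linear_combination -e2 + a * eqA + (2:F)⁻¹ * eqC
        - ((lam₂ ^ q - lam₁ ^ q) * a ^ 2) * h2'
    -- the element c = a^(2q-1)
    set c : F := a ^ (2 * q - 1) with hc_def
    have hc : c * a = (a ^ q) ^ 2 := by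
      rw [hc_def, ← pow_succ]
      have : 2 * q - 1 + 1 = 2 * q := by omega
      rw [this, two_mul, pow_add]
      ring
    have hcq : c ^ q * a ^ q = a ^ 2 := by
      have := congrArg (· ^ q) hc
      simp only [mul_pow] at this
      rw [hsqq, hqq] at this
      exact this
    have eqE : (lam₂ ^ q - lam₁ ^ q) * a = (lam₂ - lam₁) * c := by
      have h1 : ((lam₂ ^ q - lam₁ ^ q) * a) * a = ((lam₂ - lam₁) * c) * a := by
        rw [mul_assoc (lam₂ - lam₁), hc]
        linear_combination eqC
      exact mul_right_cancel₀ ha0 h1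
    have hμ : lam₂ - lam₁ ≠ 0 := sub_ne_zero.mpr (Ne.symm hlam)
    have key : tr q (κ * a + a ^ (2 * q - 1)) = 0 := by
      have hmain : ((lam₂ - lam₁) * a ^ q) * tr q (κ * a + a ^ (2 * q - 1)) = 0 := by
        have htr : tr q (κ * a + a ^ (2 * q - 1))
            = κ * a + c + (κ ^ q * a ^ q + c ^ q) := by
          unfold tr
          rw [frobAdd, mul_pow]
        rw [htr]
        linear_combination a * eqD - κ ^ q * eqC - a ^ q * eqE
          + (lam₂ - lam₁) * hcq
      rcases mul_eq_zero.mp hmain with h | h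
      · exact absurd h (mul_ne_zero hμ (pow_ne_zero _ ha0))
      · exact h
    exact hκ a ha0 key
  · rintro rfl
    constructor <;> exact ⟨0, by norm_num [tr, zero_pow hq0]⟩

end BEL
end

section
/- Let q be an odd prime power, κ ∈ F_{q^2}, λ ∈ F_{q^2}, t ∈ F_q. Then A_t^λ = {(a, a^{q+1}t + Tr(λa + κλa^q + (1/2)λ^q a^2), at + λa^q) : a ∈ F_{q^2}} is a subgroup of the Heisenberg group E of order q^2. -/
/-! Let `σ x = x ^ q`, the involutive Frobenius of `𝔽_{q²}`. The map `a ↦ (a, Q a, ψ a)` with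
`ψ a = a t + λ σ a` and `Q a = a σ(a) t + Tr(λ a + κ λ σ a + λ^q a² / 2)` is a homomorphism from
`(𝔽_{q²}, +)` to the Heisenberg group: `ψ` is additive and `Q` is a quadratic form whose
polarization `Q (a + b) - Q a - Q b = Tr (σ (ψ a) b)` is exactly the twisting term of the group
law (the `1/2` cancels the cross term of `a²`). `Q a` lies in `𝔽_q` as a multiple of a norm plus a
trace, and the homomorphism is injective, so its image has `q²` elements. -/

open Polynomial

namespace BEL

variable {F : Type*} [Field F]

def AlamPoint (q : ℕ) (κ lam t a : F) : F × F × F :=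
  (a, a ^ (q + 1) * t + tr q (lam * a + κ * lam * a ^ q + (2 : F)⁻¹ * lam ^ q * a ^ 2),
    a * t + lam * a ^ q)

theorem Alam_eq_range (q : ℕ) (κ lam t : F) :
    Alam q κ lam t = Set.range (AlamPoint q κ lam t) := by
  ext x
  simp [Alam, AlamPoint, eq_comm]

theorem two_ne_zero_of_odd_card [Fintype F] (h : Odd (Fintype.card F)) : (2 : F) ≠ 0 :=
  Ring.two_ne_zero fun hchar ↦
    Nat.not_even_iff_odd.mpr h (Nat.even_iff.mpr (FiniteField.even_card_iff_char_two.mp hchar))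

section Frobenius

variable {q : ℕ} {σ : F →+* F}

theorem tr_eq (hσ : ∀ x : F, x ^ q = σ x) (x : F) : tr q x = x + σ x := by
  rw [tr, hσ]

theorem AlamPoint_zero (hσ : ∀ x : F, x ^ q = σ x) (κ lam t : F) :
    AlamPoint q κ lam t 0 = (0, 0, 0) := by
  simp [AlamPoint, tr_eq hσ, hσ]

theorem AlamPoint_mem_carrier (hσ : ∀ x : F, x ^ q = σ x) (hσσ : Function.Involutive σ)
    {t : F} (ht : σ t = t) (κ lam a : F) : AlamPoint q κ lam t a ∈ carrier q := by
  simp only [carrier, AlamPoint, Set.mem_ofPred_eq, tr_eq hσ, hσ, pow_succ, map_add, map_mul,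
    hσσ _, ht]
  ring

theorem hmul_AlamPoint (hσ : ∀ x : F, x ^ q = σ x) (hσσ : Function.Involutive σ)
    (h2 : (2 : F) ≠ 0) {t : F} (ht : σ t = t) (κ lam a b : F) :
    hmul q (AlamPoint q κ lam t a) (AlamPoint q κ lam t b) = AlamPoint q κ lam t (a + b) := by
  simp only [hmul, AlamPoint, tr_eq hσ, hσ, pow_succ, map_add, map_mul, map_pow, map_inv₀,
    map_ofNat, hσσ _, ht, Prod.mk.injEq, true_and]
  constructor
  · field_simp
    ring
  · ring

end Frobenius

theorem Alam_subgroup_of_order_q_sq_general (p n q : ℕ) (hp : p.Prime)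
    (hq : q = p ^ n) (hodd : Odd q)
    (F : Type*) [Field F] [Fintype F] (hF : Fintype.card F = q ^ 2)
    (κ lam t : F) (ht : t ^ q = t) :
    Alam q κ lam t ⊆ carrier q ∧
    (0, 0, 0) ∈ Alam (F := F) q κ lam t ∧
    (∀ x y : F × F × F, x ∈ Alam q κ lam t → y ∈ Alam q κ lam t →
      hmul q x y ∈ Alam q κ lam t) ∧
    (∀ x ∈ Alam (F := F) q κ lam t, ∃ y ∈ Alam (F := F) q κ lam t,
      hmul q x y = (0, 0, 0) ∧ hmul q y x = (0, 0, 0)) ∧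
    Nat.card (Alam (F := F) q κ lam t) = q ^ 2 := by
  have : Fact p.Prime := ⟨hp⟩
  have : CharP F p :=
    charP_of_card_eq_prime_pow (f := 2 * n) (by rw [hF, hq, ← pow_mul, mul_comm])
  have hσ : ∀ x : F, x ^ q = iterateFrobenius F p n x := fun x ↦ by rw [iterateFrobenius_def, hq]
  have hσσ : Function.Involutive (iterateFrobenius F p n) := fun x ↦ by
    rw [← hσ, ← hσ, ← pow_mul, ← sq, ← hF, FiniteField.pow_card]
  have h2 : (2 : F) ≠ 0 := two_ne_zero_of_odd_card (by rw [hF]; exact hodd.pow)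
  rw [hσ] at ht
  have hmul_eq := hmul_AlamPoint hσ hσσ h2 ht κ lam
  have hzero := AlamPoint_zero hσ κ lam t
  rw [Alam_eq_range]
  refine ⟨?_, ⟨0, hzero⟩, ?_, ?_, ?_⟩
  · rintro _ ⟨a, rfl⟩
    exact AlamPoint_mem_carrier hσ hσσ ht κ lam a
  · rintro _ _ ⟨a, rfl⟩ ⟨b, rfl⟩
    exact ⟨a + b, (hmul_eq a b).symm⟩
  · rintro _ ⟨a, rfl⟩
    exact ⟨_, ⟨-a, rfl⟩, by rw [hmul_eq, add_neg_cancel, hzero],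
      by rw [hmul_eq, neg_add_cancel, hzero]⟩
  · rw [Nat.card_range_of_injective fun a b h ↦ congrArg Prod.fst h, Nat.card_eq_fintype_card, hF]

theorem Alam_subgroup_of_order_q_sq (p n q : ℕ) (hp : p.Prime) (hn : 0 < n)
    (hq : q = p ^ n) (hodd : Odd q)
    (F : Type*) [Field F] [Fintype F] (hF : Fintype.card F = q ^ 2)
    (κ lam t : F) (ht : t ^ q = t) :
    Alam q κ lam t ⊆ carrier q ∧
    (0, 0, 0) ∈ Alam (F := F) q κ lam t ∧
    (∀ x y : F × F × F, x ∈ Alam q κ lam t → y ∈ Alam q κ lam t →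
      hmul q x y ∈ Alam q κ lam t) ∧
    (∀ x ∈ Alam (F := F) q κ lam t, ∃ y ∈ Alam (F := F) q κ lam t,
      hmul q x y = (0, 0, 0) ∧ hmul q y x = (0, 0, 0)) ∧
    Nat.card (Alam (F := F) q κ lam t) = q ^ 2 :=
  Alam_subgroup_of_order_q_sq_general p n q hp hq hodd F hF κ lam t ht

end BEL
end

section
/- Let q be an odd prime power and κ ∈ F_{q^2} with Tr(κa + a^{2q−1}) ≠ 0 for all nonzero a ∈ F_{q^2}. Suppose a ∈ F_{q^2}, λ_1 ≠ λ_2 ∈ F_{q^2}, and t_1, t_2 ∈ F_q satisfy a^{q+1}(t_1 − t_2) = Tr((λ_2 − λ_1)(a + κa^q + (1/2)a^{2q})) and a(t_1 − t_2) = (λ_2 − λ_1)a^q. Then a = 0. -/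
open Polynomial

namespace BEL

variable {F : Type*} [Field F]

theorem key_computation (p n q : ℕ) (hp : p.Prime) (hn : 0 < n)
    (hq : q = p ^ n) (hodd : Odd q)
    (F : Type*) [Field F] [Fintype F] (hF : Fintype.card F = q ^ 2) (κ : F)
    (hκ : ∀ a : F, a ≠ 0 → tr q (κ * a + a ^ (2 * q - 1)) ≠ 0)
    (a lam₁ lam₂ t₁ t₂ : F) (hlam : lam₁ ≠ lam₂)
    (ht₁ : t₁ ^ q = t₁) (ht₂ : t₂ ^ q = t₂)
    (heq1 : a ^ (q + 1) * (t₁ - t₂) =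
      tr q ((lam₂ - lam₁) * (a + κ * a ^ q + (2 : F)⁻¹ * a ^ (2 * q))))
    (heq2 : a * (t₁ - t₂) = (lam₂ - lam₁) * a ^ q) :
    a = 0 := by
  by_contra ha
  haveI : Fact p.Prime := ⟨hp⟩
  have hq1 : 1 ≤ q := by rw [hq]; exact Nat.one_le_pow _ _ hp.pos
  haveI hchar : CharP F p := by
    haveI := ringChar.charP F
    obtain ⟨m, hrp, hcard⟩ := FiniteField.card F (ringChar F)
    have hdvd : p ∣ ringChar F ^ (m : ℕ) := by
      rw [← hcard, hF, hq, ← pow_mul]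
      exact dvd_pow_self p (by positivity)
    have hpr : p = ringChar F :=
      (Nat.prime_dvd_prime_iff_eq hp hrp).mp (hp.dvd_of_dvd_pow hdvd)
    rw [hpr]; exact ringChar.charP F
  have hadd : ∀ x y : F, (x + y) ^ q = x ^ q + y ^ q := by
    intro x y; rw [hq]; exact add_pow_char_pow x y p n
  have hsub : ∀ x y : F, (x - y) ^ q = x ^ q - y ^ q := by
    intro x y; rw [hq]; exact sub_pow_char_pow x y n
  have hcardpow : ∀ x : F, x ^ (q * q) = x := by
    intro x
    rw [show q * q = q ^ 2 by ring, ← hF]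
    exact FiniteField.pow_card x
  have h2 : (2 : F) ^ q = 2 := by
    have h := hadd 1 1; norm_num at h; exact h
  have hinv2 : ((2 : F)⁻¹) ^ q = (2 : F)⁻¹ := by rw [inv_pow, h2]
  have hp2 : p ≠ 2 := by
    rintro rfl
    rw [hq] at hodd
    exact (Nat.not_odd_iff_even.mpr (Nat.even_pow.mpr ⟨even_two, hn.ne'⟩)) hodd
  have h2ne : (2 : F) ≠ 0 := by
    intro h0
    have h := (CharP.cast_eq_zero_iff F p 2).mp (by exact_mod_cast h0)
    exact hp2 ((Nat.prime_dvd_prime_iff_eq hp Nat.prime_two).mp h)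
  have htwo : (2 : F)⁻¹ * 2 = 1 := inv_mul_cancel₀ h2ne
  set s := t₁ - t₂ with hs_def
  set μ := lam₂ - lam₁ with hmu_def
  have hμ : μ ≠ 0 := sub_ne_zero.mpr (Ne.symm hlam)
  have haq : a ^ q ≠ 0 := pow_ne_zero _ ha
  have hsq' : s ^ q = s := by rw [hs_def, hsub, ht₁, ht₂]
  have hs0 : s ≠ 0 := by
    intro h
    rw [h, mul_zero] at heq2
    rcases mul_eq_zero.mp heq2.symm with h' | h'
    · exact hμ h'
    · exact haq h'
  have hμq : a ^ q * s = μ ^ q * a := by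
    have h := congrArg (fun x : F => x ^ q) heq2
    rw [mul_pow, mul_pow, hsq', ← pow_mul, hcardpow] at h
    exact h
  obtain ⟨c, hc1⟩ : ∃ c, c + 1 = 2 * q := ⟨2 * q - 1, by omega⟩
  have hgoal2q : 2 * q - 1 = c := by omega
  rw [show 2 * q = c + 1 from hc1.symm] at heq1
  have hA : a ^ ((c + 1) * q) = a ^ 2 := by
    rw [show (c + 1) * q = (q * q) * 2 by rw [hc1]; ring, pow_mul, hcardpow]
  have hB : a ^ (c * q) * a ^ q = a ^ 2 := by
    rw [← pow_add, show c * q + q = (c + 1) * q by ring, hA]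
  have hC : a ^ (c + 1) = a ^ (2 * q) := by rw [hc1]
  have hD : (a + κ * a ^ q + (2 : F)⁻¹ * a ^ (c + 1)) ^ q
      = a ^ q + κ ^ q * a + (2 : F)⁻¹ * a ^ 2 := by
    rw [hadd, hadd, mul_pow, mul_pow]
    simp only [← pow_mul]
    rw [hcardpow, hinv2, hA]
  have heq1' : a ^ (q + 1) * s
      = μ * a + μ * κ * a ^ q + (2 : F)⁻¹ * μ * a ^ (c + 1)
        + μ ^ q * a ^ q + μ ^ q * κ ^ q * a + (2 : F)⁻¹ * μ ^ q * a ^ 2 := by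
    rw [heq1]
    simp only [tr]
    rw [mul_pow, hD]
    ring
  have K : s * (a ^ 2 + κ * a ^ (q + 1) + a ^ (c + q) + κ ^ q * a ^ (2 * q)) = 0 := by
    linear_combination (-(a ^ q)) * heq1' + (a + κ * a ^ q + (2 : F)⁻¹ * a ^ (c + 1)) * heq2
      + (a ^ c + κ ^ q * a ^ q + (2 : F)⁻¹ * a ^ (q + 1)) * hμq
      + (μ ^ q - (2 : F)⁻¹ * s * a) * hC
      - (s * a ^ (2 * q + 1)) * htwo
  have K' : a ^ 2 + κ * a ^ (q + 1) + a ^ (c + q) + κ ^ q * a ^ (2 * q) = 0 :=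
    (mul_eq_zero.mp K).resolve_left hs0
  refine absurd ?_ (hκ a ha)
  rw [hgoal2q]
  simp only [tr]
  rw [hadd, mul_pow, ← pow_mul]
  have H : a ^ q * (κ * a + a ^ c + (κ ^ q * a ^ q + a ^ (c * q))) = 0 := by
    linear_combination K' + hB
  exact (mul_eq_zero.mp H).resolve_left haq

end BEL
end
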